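/- Let E_lw(w) = −∫_ℝ [ a (w^{(j)})² + N_{p+1}(w) ] dx with a < 0 (so the quadratic part is coercive), where |N_{p+1}(x)| ≤ C|x|^{p+1} and 2 ≤ p < 4j+1. Then E_lw is bounded below on the constraint set W₁ = { w ∈ H^j(ℝ) : (1/2)∫ w² dx = 1 }. -/

import Mathlib

/-!
Write `‖f‖` for the L² norm. Integration by parts gives `‖w⁽ⁱ⁺¹⁾‖² ≤ ‖w⁽ⁱ⁾‖ ‖w⁽ⁱ⁺²⁾‖`, so the
norms of the derivatives form a log-convex sequence and `‖w'‖ʲ ≤ ‖w‖ʲ⁻¹ ‖w⁽ʲ⁾‖`. With the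
Agmon bound `sup w² ≤ 2 ‖w‖ ‖w'‖` this gives the Gagliardo–Nirenberg estimate
`∫ |N(w)| ≤ C (sup w²)^((p-1)/2) ‖w‖² ≤ c ‖w⁽ʲ⁾‖^θ` with `θ = (p-1)/(2j) < 2` on the constraint set,
and Young's inequality absorbs `c ‖w⁽ʲ⁾‖^θ` into the coercive term `-a ‖w⁽ʲ⁾‖²`.
-/

open MeasureTheory Real

lemma exists_mul_rpow_le_mul_rpow_add {c θ q ε : ℝ} (hc : 0 ≤ c) (hθ : 0 ≤ θ) (hθq : θ < q)
    (hε : 0 < ε) : ∃ K, 0 ≤ K ∧ ∀ x : ℝ, 0 ≤ x → c * x ^ θ ≤ ε * x ^ q + K := by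
  have hqθ : 0 < q - θ := sub_pos.2 hθq
  set R := (c / ε) ^ (q - θ)⁻¹
  have hR : 0 ≤ R := by positivity
  refine ⟨c * R ^ θ, by positivity, fun x hx => ?_⟩
  rcases le_or_gt x R with hxR | hRx
  · have : 0 ≤ ε * x ^ q := by positivity
    have : c * x ^ θ ≤ c * R ^ θ := by gcongr
    linarith
  · have hx0 : 0 < x := hR.trans_lt hRx
    have hcx : c ≤ ε * x ^ (q - θ) := by
      have := rpow_le_rpow hR hRx.le hqθ.le
      rwa [rpow_inv_rpow (div_nonneg hc hε.le) hqθ.ne', div_le_iff₀ hε, mul_comm] at this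
    calc c * x ^ θ ≤ ε * x ^ (q - θ) * x ^ θ := by gcongr
      _ = ε * x ^ q := by rw [mul_assoc, ← rpow_add hx0, sub_add_cancel]
      _ ≤ ε * x ^ q + c * R ^ θ := le_add_of_nonneg_right (by positivity)

section LogConvex

variable {A : ℕ → ℝ} {n : ℕ}

lemma mul_le_mul_succ_of_sq_le_mul (hA : ∀ i, 0 ≤ A i)
    (hlog : ∀ i, i + 2 ≤ n → A (i + 1) ^ 2 ≤ A i * A (i + 2)) :
    ∀ k, k + 1 ≤ n → A 1 * A k ≤ A 0 * A (k + 1) := by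
  -- `A (k + 1) / A k ≥ A 1 / A 0`, stated without division
  intro k
  induction k with
  | zero => exact fun _ => (mul_comm _ _).le
  | succ k ih =>
    intro hk
    rcases (hA (k + 1)).eq_or_lt with h0 | hpos
    · rw [← h0, mul_zero]
      exact mul_nonneg (hA 0) (hA _)
    refine le_of_mul_le_mul_left ?_ hpos
    calc A (k + 1) * (A 1 * A (k + 1)) = A 1 * A (k + 1) ^ 2 := by ring
      _ ≤ A 1 * (A k * A (k + 2)) := mul_le_mul_of_nonneg_left (hlog k hk) (hA 1)
      _ = A 1 * A k * A (k + 2) := by ring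
      _ ≤ A 0 * A (k + 1) * A (k + 2) := mul_le_mul_of_nonneg_right (ih (by omega)) (hA _)
      _ = A (k + 1) * (A 0 * A (k + 1 + 1)) := by ring

lemma pow_le_pow_pred_mul_of_sq_le_mul (hA : ∀ i, 0 ≤ A i)
    (hlog : ∀ i, i + 2 ≤ n → A (i + 1) ^ 2 ≤ A i * A (i + 2)) (hn : 1 ≤ n) :
    A 1 ^ n ≤ A 0 ^ (n - 1) * A n := by
  suffices ∀ k, 1 ≤ k → k ≤ n → A 1 ^ k ≤ A 0 ^ (k - 1) * A k from this n hn le_rfl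
  intro k hk
  induction k, hk using Nat.le_induction with
  | base => simp
  | succ k hk ih =>
    intro hkn
    calc A 1 ^ (k + 1) = A 1 ^ k * A 1 := pow_succ _ _
      _ ≤ A 0 ^ (k - 1) * A k * A 1 := mul_le_mul_of_nonneg_right (ih (by omega)) (hA 1)
      _ = A 0 ^ (k - 1) * (A 1 * A k) := by ring
      _ ≤ A 0 ^ (k - 1) * (A 0 * A (k + 1)) :=
        mul_le_mul_of_nonneg_left (mul_le_mul_succ_of_sq_le_mul hA hlog k hkn) (pow_nonneg (hA 0) _)
      _ = A 0 ^ (k + 1 - 1) * A (k + 1) := by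
        rw [← mul_assoc, pow_sub_one_mul (by omega), Nat.add_sub_cancel]

end LogConvex

noncomputable def l2Norm (f : ℝ → ℝ) : ℝ := √(∫ x, f x ^ 2)

lemma l2Norm_nonneg (f : ℝ → ℝ) : 0 ≤ l2Norm f := sqrt_nonneg _

lemma l2Norm_sq (f : ℝ → ℝ) : l2Norm f ^ 2 = ∫ x, f x ^ 2 :=
  sq_sqrt (integral_nonneg fun _ => sq_nonneg _)

lemma integral_abs_mul_le_l2Norm_mul {u v : ℝ → ℝ} (hu : MemLp u 2) (hv : MemLp v 2) :
    ∫ x, |u x * v x| ≤ l2Norm u * l2Norm v := by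
  have h := integral_mul_norm_le_Lp_mul_Lq HolderConjugate.two_two
    (by simpa using hu) (by simpa using hv)
  simpa [l2Norm, sqrt_eq_rpow, abs_mul] using h

lemma sq_le_two_mul_l2Norm_mul_l2Norm {u u' : ℝ → ℝ} (hderiv : ∀ x, HasDerivAt u (u' x) x)
    (hu : MemLp u 2) (hu' : MemLp u' 2) (x : ℝ) : u x ^ 2 ≤ 2 * (l2Norm u * l2Norm u') := by
  have hderiv_sq : ∀ y, HasDerivAt (fun y => u y ^ 2) (2 * (u y * u' y)) y := fun y => by
    simpa [mul_assoc] using (hderiv y).fun_pow 2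
  have hint : Integrable fun y => 2 * (u y * u' y) := (hu.integrable_mul hu').const_mul 2
  have htop := tendsto_zero_of_hasDerivAt_of_integrableOn_Ioi (a := x) (fun y _ => hderiv_sq y)
    hint.integrableOn hu.integrable_sq.integrableOn
  have hFTC := integral_Ioi_of_hasDerivAt_of_tendsto' (a := x) (fun y _ => hderiv_sq y)
    hint.integrableOn htop
  calc u x ^ 2 = -∫ y in Set.Ioi x, 2 * (u y * u' y) := by rw [hFTC]; ring
    _ ≤ ∫ y in Set.Ioi x, |2 * (u y * u' y)| := (neg_le_abs _).trans abs_integral_le_integral_abs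
    _ ≤ ∫ y, |2 * (u y * u' y)| :=
      setIntegral_le_integral hint.abs (ae_of_all _ fun _ => abs_nonneg _)
    _ = 2 * ∫ y, |u y * u' y| := by simp only [abs_mul, abs_two, integral_const_mul]
    _ ≤ 2 * (l2Norm u * l2Norm u') := by
      gcongr
      simpa only [abs_mul] using integral_abs_mul_le_l2Norm_mul hu hu'

lemma l2Norm_sq_le_mul_of_hasDerivAt {u u' u'' : ℝ → ℝ} (hu : ∀ x, HasDerivAt u (u' x) x)
    (hu' : ∀ x, HasDerivAt u' (u'' x) x) (h₀ : MemLp u 2) (h₁ : MemLp u' 2) (h₂ : MemLp u'' 2) :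
    l2Norm u' ^ 2 ≤ l2Norm u * l2Norm u'' := by
  have hibp : ∫ x, u x * u'' x = -∫ x, u' x * u' x :=
    integral_mul_deriv_eq_deriv_mul_of_integrable (fun x _ => hu x) (fun x _ => hu' x)
      (h₀.integrable_mul h₂) (h₁.integrable_mul h₁) (h₀.integrable_mul h₁)
  calc l2Norm u' ^ 2 = -∫ x, u x * u'' x := by
        rw [l2Norm_sq, hibp, neg_neg]; simp only [sq]
    _ ≤ ∫ x, |u x * u'' x| := (neg_le_abs _).trans abs_integral_le_integral_abs
    _ ≤ l2Norm u * l2Norm u'' := integral_abs_mul_le_l2Norm_mul h₀ h₂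

lemma hasDerivAt_iteratedDeriv_of_lt {j i : ℕ} {w : ℝ → ℝ} (hw : ContDiff ℝ j w) (hi : i < j)
    (x : ℝ) : HasDerivAt (iteratedDeriv i w) (iteratedDeriv (i + 1) w x) x := by
  rw [iteratedDeriv_succ]
  exact (hw.differentiable_iteratedDeriv i (mod_cast hi)).differentiableAt.hasDerivAt

lemma l2Norm_iteratedDeriv_one_pow_le {j : ℕ} (hj : 1 ≤ j) {w : ℝ → ℝ} (hw : ContDiff ℝ j w)
    (hmem : ∀ i ≤ j, MemLp (iteratedDeriv i w) 2) :
    l2Norm (iteratedDeriv 1 w) ^ j ≤ l2Norm w ^ (j - 1) * l2Norm (iteratedDeriv j w) := by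
  have := pow_le_pow_pred_mul_of_sq_le_mul (A := fun i => l2Norm (iteratedDeriv i w))
    (fun _ => l2Norm_nonneg _)
    (fun i hi => l2Norm_sq_le_mul_of_hasDerivAt (hasDerivAt_iteratedDeriv_of_lt hw (by omega))
      (hasDerivAt_iteratedDeriv_of_lt hw (by omega)) (hmem i (by omega)) (hmem _ (by omega))
      (hmem _ hi)) hj
  simpa only [iteratedDeriv_zero] using this

lemma abs_rpow_add_one_le {y S p : ℝ} (hp : 1 ≤ p) (hy : y ^ 2 ≤ S) :
    |y| ^ (p + 1) ≤ S ^ ((p - 1) / 2) * y ^ 2 := by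
  have hsplit : |y| ^ (p + 1) = (y ^ 2) ^ ((p - 1) / 2) * y ^ 2 := by
    rw [← sq_abs, ← rpow_natCast, ← rpow_mul (abs_nonneg y),
      ← rpow_add' (abs_nonneg y) (by linarith)]
    congr 1
    push_cast
    ring
  rw [hsplit]
  gcongr

lemma integral_comp_le_rpow_mul_integral_sq {N u : ℝ → ℝ} {C p S : ℝ} (hC : 0 ≤ C) (hp : 1 ≤ p)
    (hN : ∀ y, |N y| ≤ C * |y| ^ (p + 1)) (hS : ∀ x, u x ^ 2 ≤ S)
    (hu : Integrable fun x => u x ^ 2) :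
    ∫ x, N (u x) ≤ C * S ^ ((p - 1) / 2) * ∫ x, u x ^ 2 := by
  have hpt : ∀ x, |N (u x)| ≤ C * S ^ ((p - 1) / 2) * u x ^ 2 := fun x => by
    rw [mul_assoc]
    exact (hN _).trans (mul_le_mul_of_nonneg_left (abs_rpow_add_one_le hp (hS x)) hC)
  calc ∫ x, N (u x) ≤ ∫ x, |N (u x)| := (le_abs_self _).trans abs_integral_le_integral_abs
    _ ≤ ∫ x, C * S ^ ((p - 1) / 2) * u x ^ 2 :=
      integral_mono_of_nonneg (ae_of_all _ fun _ => abs_nonneg _) (hu.const_mul _) (ae_of_all _ hpt)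
    _ = C * S ^ ((p - 1) / 2) * ∫ x, u x ^ 2 := integral_const_mul _ _

lemma integral_comp_le_gagliardoNirenberg {j : ℕ} (hj : 1 ≤ j) {N w : ℝ → ℝ} {C p : ℝ}
    (hC : 0 ≤ C) (hp : 1 ≤ p) (hN : ∀ y, |N y| ≤ C * |y| ^ (p + 1)) (hw : ContDiff ℝ j w)
    (hmem : ∀ i ≤ j, MemLp (iteratedDeriv i w) 2) :
    ∫ x, N (w x) ≤ C * (2 * l2Norm w) ^ ((p - 1) / 2) * l2Norm w ^ 2 *
      (l2Norm w ^ (j - 1) * l2Norm (iteratedDeriv j w)) ^ ((p - 1) / (2 * j)) := by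
  have hw₀ : MemLp w 2 := by simpa only [iteratedDeriv_zero] using hmem 0 (Nat.zero_le j)
  have hsup : ∀ x, w x ^ 2 ≤ 2 * (l2Norm w * l2Norm (iteratedDeriv 1 w)) := by
    simpa only [iteratedDeriv_zero] using
      sq_le_two_mul_l2Norm_mul_l2Norm (hasDerivAt_iteratedDeriv_of_lt hw hj) hw₀ (hmem 1 hj)
  have hinterp : l2Norm (iteratedDeriv 1 w) ^ ((p - 1) / 2) ≤
      (l2Norm w ^ (j - 1) * l2Norm (iteratedDeriv j w)) ^ ((p - 1) / (2 * j)) := by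
    calc l2Norm (iteratedDeriv 1 w) ^ ((p - 1) / 2)
        = (l2Norm (iteratedDeriv 1 w) ^ j) ^ ((p - 1) / (2 * j)) := by
          rw [← rpow_natCast, ← rpow_mul (l2Norm_nonneg _)]
          field_simp
      _ ≤ _ := rpow_le_rpow (pow_nonneg (l2Norm_nonneg _) _)
          (l2Norm_iteratedDeriv_one_pow_le hj hw hmem) (div_nonneg (by linarith) (by positivity))
  calc ∫ x, N (w x)
      ≤ C * (2 * (l2Norm w * l2Norm (iteratedDeriv 1 w))) ^ ((p - 1) / 2) * ∫ x, w x ^ 2 :=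
        integral_comp_le_rpow_mul_integral_sq hC hp hN hsup hw₀.integrable_sq
    _ = C * (2 * l2Norm w) ^ ((p - 1) / 2) * l2Norm w ^ 2 *
          l2Norm (iteratedDeriv 1 w) ^ ((p - 1) / 2) := by
        rw [← l2Norm_sq, ← mul_assoc, mul_rpow (by positivity [l2Norm_nonneg w]) (l2Norm_nonneg _)]
        ring
    _ ≤ _ := mul_le_mul_of_nonneg_left hinterp (by have := l2Norm_nonneg w; positivity)

theorem long_wave_energy_bounded_below_general
    (j : ℕ) (hj : 1 ≤ j) (p : ℝ) (hp2 : 2 ≤ p) (hp4 : p < 4 * (j : ℝ) + 1)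
    (a : ℝ) (ha : a < 0) (N : ℝ → ℝ) (C : ℝ)
    (hNb : ∀ x : ℝ, |N x| ≤ C * |x| ^ (p + 1)) :
    ∃ B : ℝ, ∀ w : ℝ → ℝ, ContDiff ℝ j w →
      (∀ i : ℕ, i ≤ j → MemLp (iteratedDeriv i w) 2 volume) →
      ((1 : ℝ) / 2) * (∫ x : ℝ, (w x) ^ 2) = 1 →
      B ≤ -∫ x : ℝ, (a * (iteratedDeriv j w x) ^ 2 + N (w x)) := by
  have hC : 0 ≤ C := by simpa using (abs_nonneg _).trans (hNb 1)
  set θ := (p - 1) / (2 * j)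
  have hθ : θ < 2 := by rw [div_lt_iff₀ (by positivity)]; linarith
  set c := C * (2 * √2) ^ ((p - 1) / 2) * √2 ^ 2 * (√2 ^ (j - 1)) ^ θ
  obtain ⟨K, hK, hyoung⟩ := exists_mul_rpow_le_mul_rpow_add (c := c) (by positivity)
    (div_nonneg (by linarith) (by positivity)) hθ (neg_pos.2 ha)
  refine ⟨-K, fun w hw hmem hmass => ?_⟩
  have hmass' : l2Norm w = √2 := by rw [l2Norm]; congr 1; linarith
  have hGN : ∫ x, N (w x) ≤ c * l2Norm (iteratedDeriv j w) ^ θ := by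
    have := integral_comp_le_gagliardoNirenberg hj hC (by linarith) hNb hw hmem
    rwa [hmass', mul_rpow (by positivity) (l2Norm_nonneg _), ← mul_assoc] at this
  have hQ := hyoung _ (l2Norm_nonneg (iteratedDeriv j w))
  rw [rpow_two, l2Norm_sq] at hQ
  -- a non-integrable integrand has integral `0`
  by_cases hint : Integrable fun x => a * iteratedDeriv j w x ^ 2 + N (w x)
  · have hsq : Integrable fun x => a * iteratedDeriv j w x ^ 2 :=
      (hmem j le_rfl).integrable_sq.const_mul a
    have hNw : Integrable fun x => N (w x) :=
      (hint.sub hsq).congr (ae_of_all _ fun _ => add_sub_cancel_left _ _)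
    rw [integral_add hsq hNw, integral_const_mul]
    linarith
  · rw [integral_undef hint, neg_zero]
    linarith

/-- The long-wave energy `E_lw(w) = −∫ (a (w^(j))² + N_{p+1}(w))` with `a < 0` and
`|N_{p+1}(x)| ≤ C|x|^{p+1}`, `2 ≤ p < 4j+1`, is bounded below on the constraint set
`W₁ = {w ∈ H^j(ℝ) : (1/2)∫ w² = 1}`. -/
theorem long_wave_energy_bounded_below
    (j : ℕ) (hj : 1 ≤ j) (p : ℝ) (hp2 : 2 ≤ p) (hp4 : p < 4 * (j : ℝ) + 1)
    (a : ℝ) (ha : a < 0) (N : ℝ → ℝ) (hNc : Continuous N) (C : ℝ)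
    (hNb : ∀ x : ℝ, |N x| ≤ C * |x| ^ (p + 1)) :
    ∃ B : ℝ, ∀ w : ℝ → ℝ, ContDiff ℝ j w →
      (∀ i : ℕ, i ≤ j → MemLp (iteratedDeriv i w) 2 volume) →
      ((1 : ℝ) / 2) * (∫ x : ℝ, (w x) ^ 2) = 1 →
      B ≤ -∫ x : ℝ, (a * (iteratedDeriv j w x) ^ 2 + N (w x)) :=
  long_wave_energy_bounded_below_general j hj p hp2 hp4 a ha N C hNb
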